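/- If t_1 is a labeled structure of size n (n >= 1) and t_2 is a labeled structure of size m-1 together with an extra node a (total m labels), then the number of ways to merge the two total orders of labels into one total order on n+m labels such that a comes after the second-smallest element of t_1's order equals binomial(n+m-1, m) = (n+m-1)!/(m!(n-1)!). -/

import Mathlib

namespace Andre

/-- Plane binary trees with natural-number labels; `nil` is the empty tree. -/
inductive PTree where
  | nil : PTree
  | node (lab : ℕ) (l r : PTree) : PTree
deriving DecidableEq

namespace PTree

def size : PTree → ℕ
  | nil => 0
  | node _ l r => l.size + r.size + 1

def labels : PTree → Finset ℕ
  | nil => ∅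
  | node a l r => insert a (l.labels ∪ r.labels)

def rootLabel : PTree → ℕ
  | nil => 0
  | node a _ _ => a

def Increasing : PTree → Prop
  | nil => True
  | node a l r => (∀ b ∈ l.labels, a < b) ∧ (∀ b ∈ r.labels, a < b) ∧ l.Increasing ∧ r.Increasing

/-- `t` is a binary increasing tree on the label set {1,…,n}. -/
def IsBIT (n : ℕ) (t : PTree) : Prop :=
  t.Increasing ∧ t.size = n ∧ t.labels = Finset.Icc 1 n

/-- standard drawing (a1),(a2): an only child is on the right, and of two
children the one with the smaller label is on the left. -/
def StdOriented : PTree → Prop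
  | nil => True
  | node _ l r => (r = nil → l = nil) ∧ (l ≠ nil → r ≠ nil → l.rootLabel < r.rootLabel)
      ∧ l.StdOriented ∧ r.StdOriented

/-- left-oriented drawing: an only child is on the left, and of two
children the one with the smaller label is on the left. -/
def LeftOriented : PTree → Prop
  | nil => True
  | node _ l r => (l = nil → r = nil) ∧ (l ≠ nil → r ≠ nil → l.rootLabel < r.rootLabel)
      ∧ l.LeftOriented ∧ r.LeftOriented

/-- strictly binary: no node has outdegree one. -/
def Strict : PTree → Prop
  | nil => True
  | node _ l r => (l = nil ↔ r = nil) ∧ l.Strict ∧ r.Strict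

/-- the collapsing procedure φ: repeatedly collapsing leaves into their parents
produces exactly the in-order reading word of the plane-drawn tree. -/
def phi : PTree → List ℕ
  | nil => []
  | node a l r => phi l ++ a :: phi r

/-- `Sim t t'` means `t` and `t'` are two plane drawings of the same
(unordered) labelled tree. -/
inductive Sim : PTree → PTree → Prop
  | nil : Sim nil nil
  | node {a : ℕ} {l r l' r' : PTree} : Sim l l' → Sim r r' → Sim (node a l r) (node a l' r')
  | swap {a : ℕ} {l r l' r' : PTree} : Sim l r' → Sim r l' → Sim (node a l r) (node a l' r')

/-- number of nodes of outdegree 0. -/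
def leaves : PTree → ℕ
  | nil => 0
  | node _ nil nil => 1
  | node _ l r => l.leaves + r.leaves

/-- number of nodes of outdegree 1. -/
def deg1 : PTree → ℕ
  | nil => 0
  | node _ nil nil => 0
  | node _ nil r => 1 + r.deg1
  | node _ l nil => 1 + l.deg1
  | node _ l r => l.deg1 + r.deg1

/-- number of nodes of outdegree 2. -/
def deg2 : PTree → ℕ
  | nil => 0
  | node _ nil nil => 0
  | node _ nil r => r.deg2
  | node _ l nil => l.deg2
  | node _ l r => 1 + l.deg2 + r.deg2

/-- length of the min-path: start from the root and at each step move to the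
child with the least label. -/
def minPathLen : PTree → ℕ
  | nil => 0
  | node _ nil nil => 1
  | node _ nil r => 1 + r.minPathLen
  | node _ l nil => 1 + l.minPathLen
  | node _ l r => 1 + (if l.rootLabel ≤ r.rootLabel then l.minPathLen else r.minPathLen)

/-- set of labels on the min-path. -/
def minPathLabels : PTree → Finset ℕ
  | nil => ∅
  | node a nil nil => {a}
  | node a nil r => insert a r.minPathLabels
  | node a l nil => insert a l.minPathLabels
  | node a l r => insert a (if l.rootLabel ≤ r.rootLabel then l.minPathLabels else r.minPathLabels)

/-- length of the max-path: start from the root and, while the current node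
has outdegree two, move to the child with the larger label. -/
def maxPathLen : PTree → ℕ
  | nil => 0
  | node _ nil _ => 1
  | node _ _ nil => 1
  | node _ l r => 1 + (if l.rootLabel ≤ r.rootLabel then r.maxPathLen else l.maxPathLen)

/-- set of labels on the max-path. -/
def maxPathLabels : PTree → Finset ℕ
  | nil => ∅
  | node a nil _ => {a}
  | node a _ nil => {a}
  | node a l r => insert a (if l.rootLabel ≤ r.rootLabel then r.maxPathLabels else l.maxPathLabels)

/-- labels on the path from the root to the leftmost leaf. -/
def leftmostPathLabels : PTree → Finset ℕ
  | nil => ∅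
  | node a nil nil => {a}
  | node a nil r => insert a r.leftmostPathLabels
  | node a l _ => insert a l.leftmostPathLabels

/-- labels of nodes reachable from the root by performing only right steps. -/
def rightSpineLabels : PTree → Finset ℕ
  | nil => ∅
  | node a _ r => insert a r.rightSpineLabels

end PTree

/-- left-to-right minima of a word. -/
def leftToRightMinima (l : List ℕ) : Set ℕ :=
  {x | ∃ i : Fin l.length, l.get i = x ∧ ∀ j : Fin l.length, (j : ℕ) < (i : ℕ) → x < l.get j}

/-- right-to-left minima of a word. -/
def rightToLeftMinima (l : List ℕ) : Set ℕ :=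
  {x | ∃ i : Fin l.length, l.get i = x ∧ ∀ j : Fin l.length, (i : ℕ) < (j : ℕ) → x < l.get j}

/-- a word is up-down (alternating): l₀ < l₁ > l₂ < l₃ > ⋯ . -/
def IsUpDown (l : List ℕ) : Prop :=
  ∀ i : ℕ, i + 1 < l.length →
    (i % 2 = 0 → l.getD i 0 < l.getD (i + 1) 0) ∧ (i % 2 = 1 → l.getD (i + 1) 0 < l.getD i 0)

/-- the n-th Euler number: the number of up-down (alternating) permutations of {1,…,n}. -/
noncomputable def eulerNumber (n : ℕ) : ℕ :=
  {l : List ℕ | l.Perm (List.range' 1 n) ∧ IsUpDown l}.ncard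

/-- the Euler numbers as indexed in the paper: e₁ = e₂ = e₃ = 1, e₄ = 2, e₅ = 5, e₆ = 16, … -/
noncomputable def paperEuler (n : ℕ) : ℕ := eulerNumber (n - 1)

/-- the number of binary increasing trees of size n (each counted once, via its
unique standard drawing). -/
noncomputable def treeCount (n : ℕ) : ℕ :=
  {t : PTree | PTree.IsBIT n t ∧ PTree.StdOriented t}.ncard

/-- number of binary increasing trees of size n whose min-path has m nodes. -/
noncomputable def minPathCount (n m : ℕ) : ℕ :=
  {t : PTree | PTree.IsBIT n t ∧ PTree.StdOriented t ∧ t.minPathLen = m}.ncard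

/-- number of binary increasing trees of size n whose max-path has r nodes. -/
noncomputable def maxPathCount (n r : ℕ) : ℕ :=
  {t : PTree | PTree.IsBIT n t ∧ PTree.StdOriented t ∧ t.maxPathLen = r}.ncard

/-- σ is a restriction of π: σ is obtained from π by keeping only the entries 1,…,k. -/
def IsRestriction (σ π : List ℕ) : Prop :=
  ∃ k, 1 ≤ k ∧ k ≤ π.length ∧ σ = π.filter (fun x => decide (x ≤ k))

/-- σ ∈ res_n(Ã): σ has size n and is a restriction of an André permutation of
the second kind associated with a strictly binary increasing tree. -/
def InRes (n : ℕ) (σ : List ℕ) : Prop :=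
  σ.length = n ∧
  ∃ (m : ℕ) (t : PTree), PTree.IsBIT m t ∧ PTree.StdOriented t ∧ PTree.Strict t ∧
    IsRestriction σ (PTree.phi t)

/-- outdegree of the node labelled v in t (0 if absent). -/
def outdeg (v : ℕ) : PTree → ℕ
  | PTree.nil => 0
  | PTree.node a l r =>
      (if a = v then (if l = PTree.nil then 0 else 1) + (if r = PTree.nil then 0 else 1) else 0)
      + outdeg v l + outdeg v r

/-- the construction Θ: attach a new node labelled `newLab` as a child of the node
labelled `v`, redrawing in the standard way. -/
def addNode (v newLab : ℕ) : PTree → PTree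
  | PTree.nil => PTree.nil
  | PTree.node a l r =>
      if a = v then
        match l, r with
        | PTree.nil, PTree.nil =>
            PTree.node a PTree.nil (PTree.node newLab PTree.nil PTree.nil)
        | PTree.nil, c => PTree.node a c (PTree.node newLab PTree.nil PTree.nil)
        | c, PTree.nil => PTree.node a c (PTree.node newLab PTree.nil PTree.nil)
        | _, _ => PTree.node a l r
      else PTree.node a (addNode v newLab l) (addNode v newLab r)

theorem card_filter_card_eq_and_notMem {α : Type*} [Fintype α] [DecidableEq α] (a : α) (m : ℕ) :
    (Finset.univ.filter fun S : Finset α => S.card = m ∧ a ∉ S).card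
      = Nat.choose (Fintype.card α - 1) m := by
  have hS : (Finset.univ.filter fun S : Finset α => S.card = m ∧ a ∉ S)
      = (Finset.univ.erase a).powersetCard m := by
    ext S
    simp [Finset.mem_powersetCard, Finset.subset_erase, and_comm]
  rw [hS, Finset.card_powersetCard, Finset.card_erase_of_mem (Finset.mem_univ a),
    Finset.card_univ]

/-- A merge is encoded by the set of positions taken by the second order; the constraint on `a`
says that position `0` is not one of them. -/
theorem shuffle_count_general (n m : ℕ) (hn : 1 ≤ n) :
    (Finset.univ.filter
        (fun S : Finset (Fin (n + m)) => S.card = m ∧ ∀ i ∈ S, 1 ≤ (i : ℕ))).card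
      = Nat.choose (n + m - 1) m ∧
    Nat.choose (n + m - 1) m * (Nat.factorial m * Nat.factorial (n - 1))
      = Nat.factorial (n + m - 1) := by
  constructor
  · let zero : Fin (n + m) := ⟨0, by omega⟩
    have avoids_zero (S : Finset (Fin (n + m))) : (∀ i ∈ S, 1 ≤ (i : ℕ)) ↔ zero ∉ S :=
      ⟨fun h hz => absurd (h zero hz) (by simp [zero]),
        fun h i hi => Nat.one_le_iff_ne_zero.mpr fun hi0 => h ((Fin.ext hi0 : i = zero) ▸ hi)⟩
    simp only [avoids_zero]
    rw [card_filter_card_eq_and_notMem, Fintype.card_fin]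
  · have h := Nat.choose_mul_factorial_mul_factorial (show m ≤ n + m - 1 by omega)
    rw [show n + m - 1 - m = n - 1 by omega] at h
    rw [← mul_assoc, h]

/-- the number of merges of two total orders of sizes n and m into
one order on n+m labels in which the distinguished first element a of the second
order comes after the smallest element (the node labelled 2) of the first order
is C(n+m-1, m) = (n+m-1)!/(m!(n-1)!). Merges correspond to m-subsets of positions;
the constraint says position 0 is not used by the second order. -/
theorem shuffle_count (n m : ℕ) (hn : 1 ≤ n) (hm : 1 ≤ m) :
    (Finset.univ.filter
        (fun S : Finset (Fin (n + m)) => S.card = m ∧ ∀ i ∈ S, 1 ≤ (i : ℕ))).card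
      = Nat.choose (n + m - 1) m ∧
    Nat.choose (n + m - 1) m * (Nat.factorial m * Nat.factorial (n - 1))
      = Nat.factorial (n + m - 1) :=
  shuffle_count_general n m hn

end Andre
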